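/- Let R be a commutative ring in which the integer k (k ≥ 2) is invertible, let ψ : R → R be an additive group endomorphism with ψ(1) = 1, let N be a natural number, and let F : ℕ → Ideal R be an antitone sequence of ideals of R such that F N = 0 and such that for every n ≥ 1 and every d ∈ F n one has ψ(d) − k^n·d ∈ F (n+1). Then for every x ∈ R with x − 1 ∈ F 1 there exists z ∈ R with z − 1 ∈ F 1 and ψ(z) = x. -/

import Mathlib

/-!
Newton-style successive approximation. If `ψ z - x ∈ F n`, then `d := k⁻ⁿ (ψ z - x)` lies in
`F n`, and since `ψ` acts as `kⁿ` on `F n / F (n + 1)`, the corrected `z - d` satisfies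
`ψ (z - d) - x ∈ F (n + 1)`. Starting from `z = 1` and correcting until the filtration
vanishes gives an exact preimage.
-/

section SuccessiveApproximation

variable {R : Type*} [CommRing R] {k : ℕ} (ψ : R →+ R) {F : ℕ → Ideal R}

theorem exists_mem_sub_mem_succ_of_sub_mem (hinv : IsUnit (k : R)) {n : ℕ}
    (hstep : ∀ d ∈ F n, ψ d - (k : R) ^ n * d ∈ F (n + 1)) {x z : R} (h : ψ z - x ∈ F n) :
    ∃ d ∈ F n, ψ (z - d) - x ∈ F (n + 1) := by
  obtain ⟨u, hu⟩ := hinv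
  set d : R := ↑(u ^ n)⁻¹ * (ψ z - x)
  have hd : d ∈ F n := Ideal.mul_mem_left _ _ h
  have hkd : (k : R) ^ n * d = ψ z - x := by
    rw [← hu, ← Units.val_pow_eq_pow_val, Units.mul_inv_cancel_left]
  refine ⟨d, hd, ?_⟩
  have heq : ψ (z - d) - x = -(ψ d - (k : R) ^ n * d) := by
    rw [map_sub, hkd]; ring
  exact heq ▸ neg_mem (hstep d hd)

theorem exists_sub_mem_of_one_le (hinv : IsUnit (k : R)) (hF : Antitone F)
    (hstep : ∀ n, 1 ≤ n → ∀ d ∈ F n, ψ d - (k : R) ^ n * d ∈ F (n + 1))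
    {x z₀ : R} (h₀ : ψ z₀ - x ∈ F 1) {n : ℕ} (hn : 1 ≤ n) :
    ∃ z, z - z₀ ∈ F 1 ∧ ψ z - x ∈ F n := by
  induction n, hn using Nat.le_induction with
  | base => exact ⟨z₀, by rw [sub_self]; exact zero_mem _, h₀⟩
  | succ n hn ih =>
    obtain ⟨z, hz, hzx⟩ := ih
    obtain ⟨d, hd, hdx⟩ := exists_mem_sub_mem_succ_of_sub_mem ψ hinv (hstep n hn) hzx
    refine ⟨z - d, ?_, hdx⟩
    rw [sub_right_comm]
    exact sub_mem hz (hF hn hd)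

end SuccessiveApproximation

theorem adams_successive_approximation_general
    (R : Type*) [CommRing R] (k : ℕ) (hinv : IsUnit (k : R))
    (ψ : R →+ R) (hψ1 : ψ 1 = 1)
    (N : ℕ) (F : ℕ → Ideal R) (hF : Antitone F) (hFN : F N = ⊥)
    (hstep : ∀ n, 1 ≤ n → ∀ d ∈ F n, ψ d - (k : R) ^ n * d ∈ F (n + 1)) :
    ∀ x : R, x - 1 ∈ F 1 → ∃ z : R, z - 1 ∈ F 1 ∧ ψ z = x := by
  intro x hx
  have h₀ : ψ 1 - x ∈ F 1 := by
    rw [hψ1, ← neg_sub]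
    exact neg_mem hx
  obtain ⟨z, hz, hzx⟩ := exists_sub_mem_of_one_le ψ hinv hF hstep h₀ (Nat.le_add_left 1 N)
  have hzx' : ψ z - x ∈ F N := hF (Nat.le_succ N) hzx
  rw [hFN, Ideal.mem_bot, sub_eq_zero] at hzx'
  exact ⟨z, hz, hzx'⟩

/-- Algebraic core of the surjectivity lemma for the Adams operation:
successive approximation along a finite filtration on which `ψ` acts
by multiplication by `k^n` on graded pieces. -/
theorem adams_successive_approximation
    (R : Type*) [CommRing R] (k : ℕ) (hk : 2 ≤ k) (hinv : IsUnit (k : R))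
    (ψ : R →+ R) (hψ1 : ψ 1 = 1)
    (N : ℕ) (F : ℕ → Ideal R) (hF : Antitone F) (hFN : F N = ⊥)
    (hstep : ∀ n, 1 ≤ n → ∀ d ∈ F n, ψ d - (k : R) ^ n * d ∈ F (n + 1)) :
    ∀ x : R, x - 1 ∈ F 1 → ∃ z : R, z - 1 ∈ F 1 ∧ ψ z = x :=
  adams_successive_approximation_general R k hinv ψ hψ1 N F hF hFN hstep
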